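/- arXiv:1704.05587 — 2 statements merged into one kernel-verified Lean document; each statement's English description precedes it below -/
import Mathlib

section
/- If A is a nonempty set of automatic equivalence relations on ℕ, then the supremum sSup A in the complete lattice Setoid ℕ is an automatic equivalence relation. -/
/-- Binary representation of `n : ℕ` over the alphabet `Option Bool`,
where the separator `□` is `none` and the digits `0`, `1` are `some false`, `some true`. -/
def natBits (n : ℕ) : List (Option Bool) := (Nat.bits n).map some

/-- The language `{ bits(m) ++ [□] ++ bits(n) | E relates m and n }` associated to an
equivalence relation `E` on ℕ. -/
def autoLang (E : Setoid ℕ) : Language (Option Bool) :=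
  {w | ∃ m n : ℕ, E.r m n ∧ w = natBits m ++ [none] ++ natBits n}

/-- An equivalence relation on ℕ is automatic if its associated language is regular,
i.e. accepted by some deterministic finite automaton. -/
def IsAutomatic (E : Setoid ℕ) : Prop := (autoLang E).IsRegular


-- bits basics
lemma gl_cons {α : Type*} (a : α) {l : List α} (h : l ≠ []) :
    (a :: l).getLast? = l.getLast? := by
  cases l with
  | nil => exact absurd rfl h
  | cons b l => rw [List.getLast?_cons_cons]

lemma bits_ne_nil {n : ℕ} (h : n ≠ 0) : Nat.bits n ≠ [] := by
  rcases Nat.even_or_odd n with ⟨k, hk⟩ | ⟨k, hk⟩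
  · have hk' : n = 2 * k := by omega
    have hk0 : k ≠ 0 := by omega
    rw [hk', Nat.bit0_bits k hk0]; simp
  · rw [hk, Nat.bit1_bits]; simp

lemma bits_getLast? {n : ℕ} (h : n ≠ 0) : (Nat.bits n).getLast? = some true := by
  induction n using Nat.strong_induction_on with
  | _ n ih =>
    rcases Nat.even_or_odd n with ⟨k, hk⟩ | ⟨k, hk⟩
    · have hk' : n = 2 * k := by omega
      have hk0 : k ≠ 0 := by omega
      rw [hk', Nat.bit0_bits k hk0, gl_cons _ (bits_ne_nil hk0)]
      exact ih k (by omega) hk0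
    · subst hk
      rw [Nat.bit1_bits]
      rcases eq_or_ne k 0 with rfl | hk0
      · simp
      · rw [gl_cons _ (bits_ne_nil hk0)]
        exact ih k (by omega) hk0

lemma bits_injective : Function.Injective Nat.bits := by
  intro m
  induction m using Nat.strong_induction_on with
  | _ m ih =>
    intro n h
    rcases eq_or_ne m 0 with rfl | hm
    · by_contra hn0
      exact bits_ne_nil (Ne.symm hn0) (by rw [← h, Nat.zero_bits])
    · have hn : n ≠ 0 := by
        rintro rfl; exact bits_ne_nil hm (by rw [h, Nat.zero_bits])
      have h1 : Nat.bodd m = Nat.bodd n := by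
        rw [Nat.bodd_eq_bits_head, Nat.bodd_eq_bits_head, h]
      have h2 : Nat.div2 m = Nat.div2 n := by
        apply ih _ (Nat.binaryRec_decreasing hm)
        rw [Nat.div2_bits_eq_tail, Nat.div2_bits_eq_tail, h]
      have e1 := Nat.bodd_add_div2 m
      have e2 := Nat.bodd_add_div2 n
      rw [h1, h2] at e1
      exact e1.symm.trans e2

lemma bits_surj {bs : List Bool} (h : bs.getLast?.getD true = true) :
    ∃ n : ℕ, Nat.bits n = bs := by
  induction bs with
  | nil => exact ⟨0, Nat.zero_bits⟩
  | cons b bs ih =>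
    rcases eq_or_ne bs [] with rfl | hbs
    · simp at h
      subst h
      exact ⟨1, Nat.one_bits⟩
    · rw [gl_cons _ hbs] at h
      obtain ⟨k, hk⟩ := ih h
      have hk0 : k ≠ 0 := by rintro rfl; rw [Nat.zero_bits] at hk; exact hbs hk.symm
      cases b with
      | false => exact ⟨2 * k, by rw [Nat.bit0_bits k hk0, hk]⟩
      | true => exact ⟨2 * k + 1, by rw [Nat.bit1_bits, hk]⟩

lemma bits_getD {n : ℕ} : (Nat.bits n).getLast?.getD true = true := by
  rcases eq_or_ne n 0 with rfl | h
  · simp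
  · rw [bits_getLast? h]; rfl

lemma split_unique {α : Type*} {x : α} :
    ∀ {a c : List α} {b d : List α}, x ∉ a → x ∉ c →
      a ++ x :: b = c ++ x :: d → a = c ∧ b = d := by
  intro a
  induction a with
  | nil =>
    intro c b d _ hc h
    cases c with
    | nil => simpa using h
    | cons e c' =>
      simp only [List.nil_append, List.cons_append, List.cons.injEq] at h
      exact absurd (by simp [← h.1]) hc
  | cons e a' ih =>
    intro c b d ha hc h
    cases c with
    | nil =>
      simp only [List.cons_append, List.nil_append, List.cons.injEq] at h
      exact absurd (by simp [h.1]) ha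
    | cons f c' =>
      simp only [List.cons_append, List.cons.injEq] at h
      obtain ⟨rfl, h2⟩ := h
      have := ih (fun hx => ha (List.mem_cons_of_mem _ hx))
        (fun hx => hc (List.mem_cons_of_mem _ hx)) h2
      exact ⟨by rw [this.1], this.2⟩
lemma gl_getD {α : Type*} (b : α) (cs : List α) (v : α) :
    (b :: cs).getLast?.getD v = cs.getLast?.getD b := by
  induction cs generalizing b v with
  | nil => simp
  | cons c cs ih =>
    rw [List.getLast?_cons_cons]
    rw [ih c v, ih c b]

section Machine

variable {Q : Type} (M : DFA (Option Bool) Q)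

/-- State: `none` = dead; `some (q1, v1, none)` = reading first block;
`some (q1, v1, some (q2, v2))` = reading second block. -/
abbrev MySt (Q : Type) := Option (Q × Bool × Option (Q × Bool))

def myStep : MySt Q → Option Bool → MySt Q
  | none, _ => none
  | some (q1, _, none), some b => some (M.step q1 (some b), b, none)
  | some (q1, v1, none), none =>
      if v1 then some (q1, v1, some (M.start, true)) else none
  | some (q1, v1, some (q2, _)), some b =>
      some (q1, v1, some (M.step q2 (some b), b))
  | some (_, _, some _), none => none

def myDFA (S : Set (Q × Q)) : DFA (Option Bool) (MySt Q) where
  step := myStep M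
  start := some (M.start, true, none)
  accept := { s | ∃ q1 q2, s = some (q1, true, some (q2, true)) ∧ (q1, q2) ∈ S }

variable (S : Set (Q × Q))

lemma myDFA_evalFrom_cons (s : MySt Q) (a : Option Bool) (w : List (Option Bool)) :
    (myDFA M S).evalFrom s (a :: w) = (myDFA M S).evalFrom ((myDFA M S).step s a) w := rfl

lemma myDFA_dead (w : List (Option Bool)) : (myDFA M S).evalFrom none w = none := by
  induction w with
  | nil => rfl
  | cons a w ih => rw [myDFA_evalFrom_cons]; exact ih

lemma phase2_eval : ∀ (cs : List Bool) (q1 : Q) (v1 : Bool) (q2 : Q) (v2 : Bool),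
    (myDFA M S).evalFrom (some (q1, v1, some (q2, v2))) (cs.map some) =
      some (q1, v1, some (M.evalFrom q2 (cs.map some), cs.getLast?.getD v2)) := by
  intro cs
  induction cs with
  | nil => intro q1 v1 q2 v2; rfl
  | cons b cs ih =>
    intro q1 v1 q2 v2
    rw [List.map_cons, myDFA_evalFrom_cons]
    show (myDFA M S).evalFrom (some (q1, v1, some (M.step q2 (some b), b))) (cs.map some) = _
    rw [ih, gl_getD]
    rfl

lemma phase1_eval : ∀ (bs : List Bool) (q : Q) (v : Bool),
    (myDFA M S).evalFrom (some (q, v, none)) (bs.map some) =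
      some (M.evalFrom q (bs.map some), bs.getLast?.getD v, none) := by
  intro bs
  induction bs with
  | nil => intro q v; rfl
  | cons b bs ih =>
    intro q v
    rw [List.map_cons, myDFA_evalFrom_cons]
    show (myDFA M S).evalFrom (some (M.step q (some b), b, none)) (bs.map some) = _
    rw [ih, gl_getD]
    rfl

lemma phase2_inv : ∀ (w : List (Option Bool)) (q1 : Q) (v1 : Bool) (q2 : Q) (v2 : Bool)
    (s : Q × Bool × Option (Q × Bool)),
    (myDFA M S).evalFrom (some (q1, v1, some (q2, v2))) w = some s →
      ∃ cs : List Bool, w = cs.map some := by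
  intro w
  induction w with
  | nil => intro _ _ _ _ _ _; exact ⟨[], rfl⟩
  | cons a w ih =>
    intro q1 v1 q2 v2 s h
    rw [myDFA_evalFrom_cons] at h
    cases a with
    | none => rw [show (myDFA M S).step (some (q1, v1, some (q2, v2))) none = none from rfl,
        myDFA_dead] at h; exact absurd h (by simp)
    | some b =>
      obtain ⟨cs, hcs⟩ := ih q1 v1 (M.step q2 (some b)) b s h
      exact ⟨b :: cs, by rw [List.map_cons, hcs]⟩

lemma phase1_inv : ∀ (w : List (Option Bool)) (q : Q) (v : Bool) (q1 : Q) (v1 : Bool)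
    (q2 : Q) (v2 : Bool),
    (myDFA M S).evalFrom (some (q, v, none)) w = some (q1, v1, some (q2, v2)) →
      ∃ (bs cs : List Bool), w = bs.map some ++ none :: cs.map some := by
  intro w
  induction w with
  | nil => intro q v q1 v1 q2 v2 h; simp [DFA.evalFrom] at h
  | cons a w ih =>
    intro q v q1 v1 q2 v2 h
    rw [myDFA_evalFrom_cons] at h
    cases a with
    | some b =>
      obtain ⟨bs, cs, hw⟩ := ih (M.step q (some b)) b q1 v1 q2 v2 h
      exact ⟨b :: bs, cs, by rw [hw]; rfl⟩
    | none =>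
      by_cases hv : v
      · subst hv
        rw [show (myDFA M S).step (some (q, true, none)) none
            = some (q, true, some (M.start, true)) from rfl] at h
        obtain ⟨cs, hcs⟩ := phase2_inv M S w q true M.start true _ h
        exact ⟨[], cs, by rw [hcs]; rfl⟩
      · rw [show (myDFA M S).step (some (q, v, none)) none
            = if v then some (q, v, some (M.start, true)) else none from rfl,
          if_neg hv, myDFA_dead] at h
        exact absurd h (by simp)

lemma myDFA_eval_natBits (m n : ℕ) :
    (myDFA M S).eval (natBits m ++ none :: natBits n) =
      some (M.eval (natBits m), true, some (M.eval (natBits n), true)) := by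
  show (myDFA M S).evalFrom (some (M.start, true, none)) _ = _
  simp only [natBits]
  rw [DFA.evalFrom_of_append, phase1_eval, bits_getD]
  rw [myDFA_evalFrom_cons]
  rw [show (myDFA M S).step (some (M.evalFrom M.start (List.map some (Nat.bits m)), true, none)) none
      = some (M.evalFrom M.start (List.map some (Nat.bits m)), true, some (M.start, true)) from rfl]
  rw [phase2_eval, bits_getD]
  rfl

end Machine

lemma myDFA_inv {Q : Type} (M : DFA (Option Bool) Q) (S : Set (Q × Q))
    (w : List (Option Bool)) (q1 q2 : Q)
    (h : (myDFA M S).eval w = some (q1, true, some (q2, true))) :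
    ∃ m n : ℕ, w = natBits m ++ none :: natBits n ∧
      M.eval (natBits m) = q1 ∧ M.eval (natBits n) = q2 := by
  obtain ⟨bs, cs, rfl⟩ := phase1_inv M S w M.start true q1 true q2 true h
  have h' : (myDFA M S).evalFrom
      ((myDFA M S).evalFrom (some (M.start, true, none)) (bs.map some))
      (none :: cs.map some) = some (q1, true, some (q2, true)) := by
    rw [← DFA.evalFrom_of_append]; exact h
  rw [phase1_eval, myDFA_evalFrom_cons] at h'
  cases hv : bs.getLast?.getD true with
  | false =>
    rw [hv] at h'
    rw [show (myDFA M S).step (some (M.evalFrom M.start (List.map some bs), false, none)) none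
        = none from rfl, myDFA_dead] at h'
    exact absurd h' (by simp)
  | true =>
    rw [hv] at h'
    rw [show (myDFA M S).step (some (M.evalFrom M.start (List.map some bs), true, none)) none
        = some (M.evalFrom M.start (List.map some bs), true, some (M.start, true)) from rfl,
      phase2_eval] at h'
    simp only [Option.some.injEq, Prod.mk.injEq] at h'
    obtain ⟨hq1, -, hq2, hcl⟩ := h'
    obtain ⟨m, hm⟩ := bits_surj hv
    obtain ⟨n, hn⟩ := bits_surj hcl
    refine ⟨m, n, ?_, ?_, ?_⟩
    · rw [natBits, natBits, hm, hn]
    · rw [natBits, hm]; exact hq1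
    · rw [natBits, hn]; exact hq2

/-- The supremum of a nonempty set of automatic equivalence relations on ℕ is automatic. -/
theorem automatic_sSup (A : Set (Setoid ℕ)) (hne : A.Nonempty)
    (hA : ∀ E ∈ A, IsAutomatic E) :
    IsAutomatic (sSup A) := by
  obtain ⟨E₀, hE₀⟩ := hne
  obtain ⟨Q, fQ, M, hM⟩ := hA E₀ hE₀
  have hnone : ∀ k : ℕ, (none : Option Bool) ∉ natBits k := by
    intro k hk
    simp [natBits] at hk
  have hNatBitsInj : ∀ m n : ℕ, natBits m = natBits n → m = n := by
    intro m n h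
    exact bits_injective (List.map_injective_iff.mpr (Option.some_injective _) h)
  have key : ∀ m n : ℕ, M.eval (natBits m) = M.eval (natBits n) → E₀.r m n := by
    intro m n h
    have hmem : natBits n ++ [none] ++ natBits n ∈ M.accepts := by
      rw [hM]; exact ⟨n, n, E₀.refl n, rfl⟩
    have hmem2 : natBits m ++ [none] ++ natBits n ∈ M.accepts := by
      rw [DFA.mem_accepts] at hmem ⊢
      have key2 : ∀ k : ℕ, M.eval (natBits k ++ [none] ++ natBits n)
          = M.evalFrom (M.eval (natBits k)) ([none] ++ natBits n) := by
        intro k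
        rw [List.append_assoc]
        exact M.evalFrom_of_append M.start _ _
      rw [key2 m, key2 n, h] at *
      exact hmem
    rw [hM] at hmem2
    obtain ⟨a, b, hab, heq⟩ := hmem2
    rw [List.append_assoc, List.append_assoc, List.singleton_append,
      List.singleton_append] at heq
    obtain ⟨h1, h2⟩ := split_unique (hnone m) (hnone a) heq
    rw [hNatBitsInj m a h1, hNatBitsInj n b h2]
    exact hab
  have hle : ∀ m n : ℕ, E₀.r m n → (sSup A).r m n := fun m n h =>
    (Setoid.le_def.mp (le_sSup hE₀)) h
  classical
  letI : Fintype Q := fQ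
  refine ⟨MySt Q, inferInstance,
    myDFA M {p : Q × Q | ∃ m n : ℕ, (sSup A).r m n ∧
      M.eval (natBits m) = p.1 ∧ M.eval (natBits n) = p.2}, ?_⟩
  set S : Set (Q × Q) := {p : Q × Q | ∃ m n : ℕ, (sSup A).r m n ∧
      M.eval (natBits m) = p.1 ∧ M.eval (natBits n) = p.2} with hS
  ext w
  constructor
  · intro hw
    rw [DFA.mem_accepts] at hw
    obtain ⟨q1, q2, heval, hq⟩ := hw
    obtain ⟨m, n, rfl, hq1, hq2⟩ := myDFA_inv M S w q1 q2 heval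
    obtain ⟨m', n', hR', h1, h2⟩ := hq
    have e1 : E₀.r m m' := key m m' (hq1.trans h1.symm)
    have e2 : E₀.r n' n := key n' n (h2.trans hq2.symm)
    have : (sSup A).r m n :=
      (sSup A).trans' (hle m m' e1) ((sSup A).trans' hR' (hle n' n e2))
    exact ⟨m, n, this, by rw [List.append_assoc, List.singleton_append]⟩
  · rintro ⟨m, n, hmn, rfl⟩
    rw [DFA.mem_accepts]
    rw [List.append_assoc, List.singleton_append, myDFA_eval_natBits]
    exact ⟨M.eval (natBits m), M.eval (natBits n), rfl, ⟨m, n, hmn, rfl, rfl⟩⟩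
end

section
/- There exist two co-r.e. equivalence relations E and F on ℕ whose join E ⊔ F in the lattice of equivalence relations is not co-r.e.; that is, the co-r.e. equivalence relations are not closed under finite join. -/
/-!
Index the points of ℕ as `⟪n, t⟫` and think of row `n` as belonging to the program coded by `n`.
Let `E` glue together all points `⟪n, t⟫` with `t ≥ 1`, and let `F` glue `⟪n, t⟫` to `⟪n, 0⟫` as
soon as program `n` halts on input `0` within `t` steps. Both are kernels of primitive recursive
maps, hence decidable. In `E ⊔ F` the points `⟪n, 0⟫` and `⟪n, 1⟫` are related exactly when
program `n` halts: if it does not, `{⟪n, 0⟫}` is a class of both `E` and `F`, hence of `E ⊔ F`.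
So if `E ⊔ F` were co-r.e., non-halting would be r.e.
-/

/-- A predicate is recursively enumerable (r.e.); `RePred` is Mathlib's name for it. -/
abbrev REPred' {α : Type} [Primcodable α] (p : α → Prop) : Prop := REPred p

open Nat.Partrec (Code)
open Nat.Partrec.Code Encodable Denumerable

theorem REPred.comp {α β : Type*} [Primcodable α] [Primcodable β] {p : β → Prop}
    (hp : REPred p) {f : α → β} (hf : Computable f) : REPred fun a => p (f a) :=
  Partrec.comp hp hf

theorem Nat.Partrec.Code.eval_dom_iff_exists_evaln_isSome {c : Code} {n : ℕ} :
    (eval c n).Dom ↔ ∃ k, (evaln k c n).isSome := by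
  simp only [Part.dom_iff_mem, evaln_complete, Option.isSome_iff_exists]
  exact ⟨fun ⟨x, k, hk⟩ => ⟨k, x, hk⟩, fun ⟨k, x, hk⟩ => ⟨x, k, hk⟩⟩

theorem Setoid.ker_le_ker_comp {α β γ : Type*} (f : α → β) (q : β → γ) :
    Setoid.ker f ≤ Setoid.ker (q ∘ f) :=
  fun _ _ h => congrArg q h

def Setoid.IsCoRE {α : Type*} [Primcodable α] (E : Setoid α) : Prop :=
  REPred fun p : α × α => ¬ E.r p.1 p.2

theorem Setoid.isCoRE_ker {α β : Type*} [Primcodable α] [Primcodable β] [DecidableEq β]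
    {f : α → β} (hf : Primrec f) : (Setoid.ker f).IsCoRE :=
  (PrimrecPred.computablePred <|
    Primrec.eq.comp (hf.comp Primrec.fst) (hf.comp Primrec.snd)).not.to_re

namespace HaltingJoin

def collapseRow (x : ℕ) : ℕ := Nat.pair x.unpair.1 (min x.unpair.2 1)

def linkAtHalt (x : ℕ) : ℕ :=
  if (evaln x.unpair.2 (ofNat Code x.unpair.1) 0).isSome then Nat.pair x.unpair.1 0 else x

theorem primrec_collapseRow : Primrec collapseRow :=
  Primrec₂.natPair.comp (Primrec.fst.comp Primrec.unpair)
    (Primrec.nat_min.comp (Primrec.snd.comp Primrec.unpair) (Primrec.const 1))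

theorem primrec_linkAtHalt : Primrec linkAtHalt := by
  have halts : Primrec fun x : ℕ => (evaln x.unpair.2 (ofNat Code x.unpair.1) 0).isSome :=
    Primrec.option_isSome.comp <| primrec_evaln.comp <|
      ((Primrec.snd.comp Primrec.unpair).pair
        ((Primrec.ofNat Code).comp (Primrec.fst.comp Primrec.unpair))).pair (Primrec.const 0)
  exact Primrec.ite (Primrec.eq.comp halts (Primrec.const true))
    (Primrec₂.natPair.comp (Primrec.fst.comp Primrec.unpair) (Primrec.const 0)) Primrec.id

theorem collapseRow_eq_pair_zero_iff {x n : ℕ} :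
    collapseRow x = Nat.pair n 0 ↔ x = Nat.pair n 0 := by
  obtain ⟨m, t, rfl⟩ : ∃ m t, x = Nat.pair m t := ⟨_, _, (Nat.pair_unpair x).symm⟩
  simp [collapseRow]

theorem linkAtHalt_eq_pair_zero_iff {c : Code} (hc : ¬ (eval c 0).Dom) {x : ℕ} :
    linkAtHalt x = Nat.pair (encode c) 0 ↔ x = Nat.pair (encode c) 0 := by
  obtain ⟨m, t, rfl⟩ : ∃ m t, x = Nat.pair m t := ⟨_, _, (Nat.pair_unpair x).symm⟩
  by_cases hm : m = encode c
  · subst hm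
    have hrun : ¬ (evaln t c 0).isSome := fun h => hc (eval_dom_iff_exists_evaln_isSome.2 ⟨t, h⟩)
    simp [linkAtHalt, hrun]
  · simp only [linkAtHalt, Nat.unpair_pair]
    split_ifs <;> simp [hm]

theorem sup_rel_pair_zero_pair_one_iff (c : Code) :
    (Setoid.ker collapseRow ⊔ Setoid.ker linkAtHalt).r
        (Nat.pair (encode c) 0) (Nat.pair (encode c) 1) ↔ (eval c 0).Dom := by
  constructor
  · intro h
    by_contra hc
    have hle : Setoid.ker collapseRow ⊔ Setoid.ker linkAtHalt ≤
        Setoid.ker (· = Nat.pair (encode c) 0) :=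
      sup_le
        (by simpa [Function.comp_def, collapseRow_eq_pair_zero_iff] using
          Setoid.ker_le_ker_comp collapseRow (· = Nat.pair (encode c) 0))
        (by simpa [Function.comp_def, linkAtHalt_eq_pair_zero_iff hc] using
          Setoid.ker_le_ker_comp linkAtHalt (· = Nat.pair (encode c) 0))
    simpa [Setoid.ker_def] using hle h
  · intro h
    obtain ⟨k, hk⟩ := eval_dom_iff_exists_evaln_isSome.1 h
    have hk0 : k ≠ 0 := by
      rintro rfl
      simp [evaln] at hk
    have hlink : (Setoid.ker linkAtHalt).r (Nat.pair (encode c) 0) (Nat.pair (encode c) k) := by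
      simp [Setoid.ker_def, linkAtHalt, hk]
    have hcollapse :
        (Setoid.ker collapseRow).r (Nat.pair (encode c) k) (Nat.pair (encode c) 1) := by
      simpa [Setoid.ker_def, collapseRow, Nat.one_le_iff_ne_zero] using hk0
    exact (Setoid.ker collapseRow ⊔ Setoid.ker linkAtHalt).iseqv.trans
      ((le_sup_right : Setoid.ker linkAtHalt ≤ _) hlink)
      ((le_sup_left : Setoid.ker collapseRow ≤ _) hcollapse)

theorem not_isCoRE_sup : ¬ (Setoid.ker collapseRow ⊔ Setoid.ker linkAtHalt).IsCoRE := by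
  intro h
  have hpairs : Computable fun c : Code => (Nat.pair (encode c) 0, Nat.pair (encode c) 1) :=
    (Primrec₂.natPair.comp Primrec.encode (Primrec.const 0)).to_comp.pair
      (Primrec₂.natPair.comp Primrec.encode (Primrec.const 1)).to_comp
  exact ComputablePred.halting_problem_not_re 0 <|
    (h.comp hpairs).of_eq fun c => not_congr (sup_rel_pair_zero_pair_one_iff c)

end HaltingJoin

/-- There are two co-r.e. equivalence relations on ℕ whose join is not co-r.e.:
the co-r.e. equivalence relations are not closed under finite join. -/
theorem core_not_closed_under_sup :
    ∃ E F : Setoid ℕ,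
      REPred' (fun p : ℕ × ℕ => ¬ E.r p.1 p.2) ∧
      REPred' (fun p : ℕ × ℕ => ¬ F.r p.1 p.2) ∧
      ¬ REPred' (fun p : ℕ × ℕ => ¬ (E ⊔ F).r p.1 p.2) :=
  ⟨_, _, Setoid.isCoRE_ker HaltingJoin.primrec_collapseRow,
    Setoid.isCoRE_ker HaltingJoin.primrec_linkAtHalt, HaltingJoin.not_isCoRE_sup⟩
end
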